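/- For all n ≥ 0, the integral over [-1,1] of (1-t)·P_n^{(2,0)}(t)·P_n^{(1,1)}(t) dt equals 4/(n+2). -/

import Mathlib

open MeasureTheory intervalIntegral Finset

/-- The Jacobi polynomial `P_n^{(a,b)}` with nonnegative integer parameters,
given by the standard finite-sum formula, normalized by
`P_n^{(a,b)}(1) = (a+1)_n / n!`. -/
noncomputable def jacobiP (a b n : ℕ) (x : ℝ) : ℝ :=
  ∑ s ∈ Finset.range (n + 1),
    (Nat.choose (n + a) (n - s) : ℝ) * (Nat.choose (n + b) s : ℝ) *
      ((x - 1) / 2) ^ s * ((x + 1) / 2) ^ (n - s)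

/-!
Write `L = P_{n+1}^{(0,0)}` and `f(t) = (1 - t) P_n^{(2,0)}(t)`. Since
`L' = (n + 2)/2 · P_n^{(1,1)}`, integration by parts turns the integral into `2/(n + 2)` times
`-f(-1) L(-1) - ∫ f' L`. The boundary term is `2`, and `∫ f' L = 0` because `deg f' ≤ n` and the
Legendre polynomial `L` is orthogonal to all polynomials of lower degree. That orthogonality
reduces, through the beta integrals `∫ ((t-1)/2)^s ((t+1)/2)^r = (-1)^s 2 s! r! / (s+r+1)!`, to
the vanishing of the `m`-th finite difference of a polynomial of degree `< m`.
-/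

open scoped Nat

theorem continuous_jacobiP (a b n : ℕ) : Continuous (jacobiP a b n) := by
  unfold jacobiP
  fun_prop

theorem jacobiP_neg_one (a b n : ℕ) : jacobiP a b n (-1) = (-1) ^ n * (n + b).choose n := by
  rw [jacobiP, sum_eq_single_of_mem n (self_mem_range_succ n) fun s hs hsn => ?_]
  · norm_num [mul_comm]
  · have : n - s ≠ 0 := by have := mem_range.mp hs; omega
    simp [this]

theorem integral_sub_one_div_two_pow_mul_add_one_div_two_pow (s r : ℕ) :
    ∫ t in (-1 : ℝ)..1, ((t - 1) / 2) ^ s * ((t + 1) / 2) ^ r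
      = (-1) ^ s * 2 * s ! * r ! / (s + r + 1)! := by
  induction s generalizing r with
  | zero =>
    have hderiv (t : ℝ) : HasDerivAt (fun t : ℝ => 2 / (r + 1) * ((t + 1) / 2) ^ (r + 1))
        (((t + 1) / 2) ^ r) t := by
      refine (((((hasDerivAt_id' t).add_const 1).div_const 2).fun_pow (r + 1)).const_mul
        (2 / ((r : ℝ) + 1))).congr_deriv ?_
      rw [Nat.add_sub_cancel]
      push_cast
      field_simp
    rw [integral_eq_sub_of_hasDerivAt (fun t _ => by simpa using hderiv t)
      (Continuous.intervalIntegrable (by fun_prop) _ _)]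
    push_cast [Nat.factorial_succ]
    field_simp
    norm_num
  | succ s ih =>
    have hsplit (t : ℝ) : ((t - 1) / 2) ^ (s + 1) * ((t + 1) / 2) ^ r
        = ((t - 1) / 2) ^ s * ((t + 1) / 2) ^ (r + 1) - ((t - 1) / 2) ^ s * ((t + 1) / 2) ^ r := by
      ring
    simp_rw [hsplit]
    rw [integral_sub (Continuous.intervalIntegrable (by fun_prop) _ _)
      (Continuous.intervalIntegrable (by fun_prop) _ _), ih, ih,
      show s + (r + 1) + 1 = s + r + 1 + 1 by ring, show s + 1 + r + 1 = s + r + 1 + 1 by ring]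
    push_cast [Nat.factorial_succ]
    field_simp
    ring

section

open Polynomial

theorem Polynomial.sum_range_neg_one_pow_mul_choose_mul_eval_eq_zero {R : Type*} [CommRing R]
    {p : R[X]} {m : ℕ} (hp : p.natDegree < m) :
    ∑ j ∈ range (m + 1), (-1) ^ (m - j) * (m.choose j : R) * p.eval (j : R) = 0 := by
  simpa [fwdDiff_iter_eq_sum_shift, zsmul_eq_mul, mul_assoc] using
    congr_fun (fwdDiff_iter_eq_zero_of_degree_lt hp) 0

theorem integral_add_one_div_two_pow_mul_jacobiP_zero_zero {k m : ℕ} (hkm : k < m) :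
    ∫ t in (-1 : ℝ)..1, ((t + 1) / 2) ^ k * jacobiP 0 0 m t = 0 := by
  -- `q(j) = (j + k)! / j!` is what the beta integrals leave of the `j`-th term.
  set q : ℝ[X] := (ascPochhammer ℝ k).comp (X + C 1)
  have hq_natDegree : q.natDegree < m := by
    rwa [natDegree_comp, ascPochhammer_natDegree, natDegree_X_add_C, mul_one]
  have hq_eval (j : ℕ) : q.eval (j : ℝ) = (j + 1).ascFactorial k := by
    rw [eval_comp, ← ascPochhammer_nat_eq_natCast_ascFactorial]
    simp
  have hexpand (t : ℝ) : ((t + 1) / 2) ^ k * jacobiP 0 0 m t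
      = ∑ j ∈ range (m + 1), (m.choose j : ℝ) * m.choose (m - j) *
          (((t - 1) / 2) ^ (m - j) * ((t + 1) / 2) ^ (j + k)) := by
    rw [jacobiP, mul_sum, ← sum_range_reflect]
    refine sum_congr rfl fun j hj => ?_
    have hjm : j ≤ m := Nat.lt_succ_iff.mp (mem_range.mp hj)
    rw [Nat.add_sub_cancel, Nat.sub_sub_self hjm, pow_add]
    simp only [add_zero]
    ring
  have hterm (j : ℕ) (hj : j ∈ range (m + 1)) :
      ∫ t in (-1 : ℝ)..1, (m.choose j : ℝ) * m.choose (m - j) *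
          (((t - 1) / 2) ^ (m - j) * ((t + 1) / 2) ^ (j + k))
        = 2 * m ! / (m + k + 1)! * ((-1) ^ (m - j) * m.choose j * q.eval (j : ℝ)) := by
    have hjm : j ≤ m := Nat.lt_succ_iff.mp (mem_range.mp hj)
    have hfact : m.choose (m - j) * (m - j)! * (j + k)! = m ! * (j + 1).ascFactorial k := by
      rw [← Nat.factorial_mul_ascFactorial, ← mul_assoc, Nat.choose_symm hjm,
        mul_right_comm (m.choose j), Nat.choose_mul_factorial_mul_factorial hjm]
    rw [intervalIntegral.integral_const_mul, integral_sub_one_div_two_pow_mul_add_one_div_two_pow,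
      hq_eval, show m - j + (j + k) + 1 = m + k + 1 by omega]
    rw [← Nat.cast_inj (R := ℝ)] at hfact
    push_cast at hfact
    linear_combination (-1) ^ (m - j) * 2 * (m.choose j : ℝ) / (m + k + 1)! * hfact
  rw [integral_congr fun t _ => hexpand t,
    integral_finsetSum fun j _ => Continuous.intervalIntegrable (by fun_prop) _ _,
    sum_congr rfl hterm, ← mul_sum,
    Polynomial.sum_range_neg_one_pow_mul_choose_mul_eval_eq_zero hq_natDegree, mul_zero]

theorem integral_eval_mul_jacobiP_zero_zero {p : ℝ[X]} {m : ℕ} (hp : p.natDegree < m) :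
    ∫ t in (-1 : ℝ)..1, p.eval t * jacobiP 0 0 m t = 0 := by
  set q := p.comp (C 2 * X - 1)
  have hq : q.natDegree < m := by
    rwa [natDegree_comp, show (C 2 * X - 1 : ℝ[X]).natDegree = 1 by compute_degree!, mul_one]
  have hexpand (t : ℝ) : p.eval t * jacobiP 0 0 m t
      = ∑ k ∈ range (q.natDegree + 1), q.coeff k * (((t + 1) / 2) ^ k * jacobiP 0 0 m t) := by
    have : p.eval t = q.eval ((t + 1) / 2) := by
      simp only [q, eval_comp, eval_sub, eval_mul, eval_C, eval_X, eval_one]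
      ring_nf
    rw [this, eval_eq_sum_range, sum_mul]
    exact sum_congr rfl fun k _ => by ring
  rw [integral_congr fun t _ => hexpand t,
    integral_finsetSum fun k _ => Continuous.intervalIntegrable
      (by have := continuous_jacobiP 0 0 m; fun_prop) _ _]
  refine sum_eq_zero fun k hk => ?_
  rw [intervalIntegral.integral_const_mul,
    integral_add_one_div_two_pow_mul_jacobiP_zero_zero (by have := mem_range.mp hk; omega),
    mul_zero]

noncomputable def jacobiPoly (a b n : ℕ) : ℝ[X] :=
  ∑ s ∈ range (n + 1), C ((n + a).choose (n - s) * (n + b).choose s : ℝ) *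
    (C 2⁻¹ * (X - 1)) ^ s * (C 2⁻¹ * (X + 1)) ^ (n - s)

theorem eval_jacobiPoly (a b n : ℕ) (x : ℝ) : (jacobiPoly a b n).eval x = jacobiP a b n x := by
  simp [jacobiPoly, jacobiP, eval_finsetSum, div_eq_inv_mul]

theorem natDegree_jacobiPoly_le (a b n : ℕ) : (jacobiPoly a b n).natDegree ≤ n := by
  refine natDegree_sum_le_of_forall_le _ _ fun s hs => ?_
  have hsn : s ≤ n := Nat.lt_succ_iff.mp (mem_range.mp hs)
  compute_degree
  omega

end

theorem hasDerivAt_sub_one_div_two_pow_mul_add_one_div_two_pow (s r : ℕ) (x : ℝ) :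
    HasDerivAt (fun x : ℝ => ((x - 1) / 2) ^ s * ((x + 1) / 2) ^ r)
      ((s * ((x - 1) / 2) ^ (s - 1) * ((x + 1) / 2) ^ r
        + r * ((x - 1) / 2) ^ s * ((x + 1) / 2) ^ (r - 1)) / 2) x := by
  have hu := (((hasDerivAt_id' x).sub_const 1).div_const 2).fun_pow s
  have hv := (((hasDerivAt_id' x).add_const 1).div_const 2).fun_pow r
  exact (hu.mul hv).congr_deriv (by ring)

theorem deriv_jacobiP_coeff_eq (a b : ℕ) {n s : ℕ} (hs : s ≤ n) :
    ((n + 1 + a).choose (n - s) * (n + 1 + b).choose (s + 1) * (s + 1 : ℕ)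
      + (n + 1 + a).choose (n + 1 - s) * (n + 1 + b).choose s * (n + 1 - s : ℕ) : ℝ)
      = (n + a + b + 2) * (n + (a + 1)).choose (n - s) * (n + (b + 1)).choose s := by
  obtain ⟨d, rfl⟩ := Nat.exists_eq_add_of_le hs
  have h₁ := Nat.add_one_mul_choose_eq (s + d + b) s
  have h₂ := Nat.add_one_mul_choose_eq (s + d + a) d
  have h₃ := Nat.choose_mul_succ_eq (s + d + a) d
  have h₄ := Nat.choose_mul_succ_eq (s + d + b) s
  rw [show s + d + a + 1 - d = a + s + 1 by omega] at h₃
  rw [show s + d + b + 1 - s = d + b + 1 by omega] at h₄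
  rw [show s + d - s = d by omega, show s + d + 1 - s = d + 1 by omega,
    show s + d + 1 + a = s + d + a + 1 by ring, show s + d + 1 + b = s + d + b + 1 by ring,
    show s + d + (a + 1) = s + d + a + 1 by ring, show s + d + (b + 1) = s + d + b + 1 by ring]
  rw [← Nat.cast_inj (R := ℝ)] at h₁ h₂ h₃ h₄
  push_cast at h₁ h₂ h₃ h₄ ⊢
  linear_combination ((s + d + a + 1).choose d : ℝ) * (h₄ - h₁)
    + ((s + d + b + 1).choose s : ℝ) * (h₃ - h₂)

theorem sum_deriv_jacobiP_terms_eq (a b n : ℕ) (u v : ℝ) :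
    ∑ s ∈ range (n + 2), ((n + 1 + a).choose (n + 1 - s) * (n + 1 + b).choose s : ℝ) *
        (s * u ^ (s - 1) * v ^ (n + 1 - s) + (n + 1 - s : ℕ) * u ^ s * v ^ (n + 1 - s - 1))
      = (n + a + b + 2) * ∑ s ∈ range (n + 1),
          ((n + (a + 1)).choose (n - s) * (n + (b + 1)).choose s : ℝ) * u ^ s * v ^ (n - s) := by
  set c : ℕ → ℝ := fun s => (n + 1 + a).choose (n + 1 - s) * (n + 1 + b).choose s
  have hlower : ∑ s ∈ range (n + 2), c s * (s * u ^ (s - 1) * v ^ (n + 1 - s))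
      = ∑ s ∈ range (n + 1), c (s + 1) * ((s + 1 : ℕ) * u ^ s * v ^ (n - s)) := by
    rw [sum_range_succ']
    simp
  have hupper : ∑ s ∈ range (n + 2), c s * ((n + 1 - s : ℕ) * u ^ s * v ^ (n + 1 - s - 1))
      = ∑ s ∈ range (n + 1), c s * ((n + 1 - s : ℕ) * u ^ s * v ^ (n - s)) := by
    rw [sum_range_succ]
    simp [Nat.sub_sub]
  simp only [mul_add, sum_add_distrib]
  rw [hlower, hupper, ← sum_add_distrib, mul_sum]
  refine sum_congr rfl fun s hs => ?_
  have := deriv_jacobiP_coeff_eq a b (Nat.lt_succ_iff.mp (mem_range.mp hs))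
  simp only [c, Nat.add_sub_add_right]
  linear_combination u ^ s * v ^ (n - s) * this

theorem hasDerivAt_jacobiP_succ (a b n : ℕ) (x : ℝ) :
    HasDerivAt (jacobiP a b (n + 1)) ((n + a + b + 2) / 2 * jacobiP (a + 1) (b + 1) n x) x := by
  have hsum := HasDerivAt.fun_sum (u := range (n + 2)) fun s _ =>
    (hasDerivAt_sub_one_div_two_pow_mul_add_one_div_two_pow s (n + 1 - s) x).const_mul
      ((n + 1 + a).choose (n + 1 - s) * (n + 1 + b).choose s : ℝ)
  have hfun : jacobiP a b (n + 1) = fun y => ∑ s ∈ range (n + 2),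
      ((n + 1 + a).choose (n + 1 - s) * (n + 1 + b).choose s : ℝ) *
        (((y - 1) / 2) ^ s * ((y + 1) / 2) ^ (n + 1 - s)) := by
    funext y
    simp only [jacobiP, mul_assoc]
  rw [hfun]
  refine hsum.congr_deriv ?_
  rw [jacobiP, div_mul_eq_mul_div, ← sum_deriv_jacobiP_terms_eq, sum_div]
  exact sum_congr rfl fun s _ => by ring

theorem integral_one_sub_mul_jacobiP_two_zero_mul_one_one (n : ℕ) :
    ∫ t in (-1 : ℝ)..1, (1 - t) * jacobiP 2 0 n t * jacobiP 1 1 n t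
      = 4 / ((n : ℝ) + 2) := by
  set f : Polynomial ℝ := (1 - Polynomial.X) * jacobiPoly 2 0 n
  have hf (t : ℝ) : f.eval t = (1 - t) * jacobiP 2 0 n t := by simp [f, eval_jacobiPoly]
  have hf' : (Polynomial.derivative f).natDegree < n + 1 := by
    have : f.natDegree ≤ 1 + n := Polynomial.natDegree_mul_le.trans
      (add_le_add (by compute_degree!) (natDegree_jacobiPoly_le 2 0 n))
    have := Polynomial.natDegree_derivative_le f
    omega
  have hL (t : ℝ) : HasDerivAt (jacobiP 0 0 (n + 1)) ((n + 2) / 2 * jacobiP 1 1 n t) t := by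
    simpa using hasDerivAt_jacobiP_succ 0 0 n t
  have hibp := integral_mul_deriv_eq_deriv_mul (a := -1) (b := 1) (fun t _ => f.hasDerivAt t)
    (fun t _ => hL t) (Continuous.intervalIntegrable (by fun_prop) _ _)
    (Continuous.intervalIntegrable (by have := continuous_jacobiP 1 1 n; fun_prop) _ _)
  calc ∫ t in (-1 : ℝ)..1, (1 - t) * jacobiP 2 0 n t * jacobiP 1 1 n t
      = 2 / (n + 2) * ∫ t in (-1 : ℝ)..1, f.eval t * ((n + 2) / 2 * jacobiP 1 1 n t) := by
        rw [← intervalIntegral.integral_const_mul]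
        refine integral_congr fun t _ => ?_
        rw [hf]
        field_simp [show (n : ℝ) + 2 ≠ 0 by positivity]
    _ = 2 / (n + 2) * (f.eval 1 * jacobiP 0 0 (n + 1) 1
          - f.eval (-1) * jacobiP 0 0 (n + 1) (-1)) := by
        rw [hibp, integral_eval_mul_jacobiP_zero_zero hf', sub_zero]
    _ = 4 / (n + 2) := by
        have hsign : (-1 : ℝ) ^ n * (-1) ^ (n + 1) = -1 := by
          rw [← pow_add]
          exact Odd.neg_one_pow ⟨n, by ring⟩
        simp only [hf, jacobiP_neg_one, add_zero, Nat.choose_self, Nat.cast_one, mul_one]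
        linear_combination (-4 / (n + 2) : ℝ) * hsign
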